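/- arXiv:2510.11439 — 3 statements merged into one kernel-verified Lean document; each statement's English description precedes it below -/
import Mathlib

section
/- Let d ≥ 1 and N ∈ ℕ. There exist a Schwartz function η ∈ S(ℝ^d) and a constant c > 0 such that 0 ≤ η(x) ≤ 1 for all x ∈ ℝ^d, η(x) = 1 whenever |x| ≤ 1, η(x) = 0 whenever |x| ≥ 2, and (Δ^{2N} η)(y) ≥ c for all y ∈ ℝ^d with 5/4 ≤ |y| ≤ 7/4, where Δ^{2N} denotes the 2N-fold iterated Laplace operator on ℝ^d. -/
/-!
Take two radial bump functions `φ ≤ ψ` with `φ = 1` on the unit ball, `φ = 0` outside radius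
`9/8`, `ψ = 1` on radius `15/8` and `ψ = 0` outside radius `2`, and set
`η = φ + (ψ - φ) t` with `t x = exp (⟪u, x⟫ - 2)` for a unit vector `u`. Then `η` takes values
in `[0, 1]` because `t` does on the ball of radius `2`, and `η = t` on the open annulus
`9/8 < ‖x‖ < 15/8`. As the Laplacian is local and `t` is a fixed point of it, `Δ^[2N] η = t`
on that annulus, and `t ≥ exp (-4)` there.
-/

open MeasureTheory

/-- The Laplace operator on functions on `EuclideanSpace ℝ (Fin d)`:
`(Δ f)(x) = ∑ i, ∂²f/∂x_i² (x)`. -/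
noncomputable def lap (d : ℕ) (f : EuclideanSpace ℝ (Fin d) → ℝ) :
    EuclideanSpace ℝ (Fin d) → ℝ :=
  fun x => ∑ i : Fin d,
    iteratedFDeriv ℝ 2 f x ![EuclideanSpace.single i 1, EuclideanSpace.single i 1]

open InnerProductSpace Laplacian Filter Metric Real Set
open scoped RealInnerProductSpace ContDiff Topology

theorem lap_eq_laplacian (d : ℕ) : lap d = Δ := by
  funext f
  rw [laplacian_eq_iteratedFDeriv_orthonormalBasis f (EuclideanSpace.basisFun (Fin d) ℝ)]
  simp only [EuclideanSpace.basisFun_apply]; rfl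

section Laplacian

variable {E : Type*} [NormedAddCommGroup E] [InnerProductSpace ℝ E] [FiniteDimensional ℝ E]

theorem laplacian_comp_inner (u : E) {g : ℝ → ℝ} (hg : ContDiff ℝ 2 g) :
    Δ (fun x => g ⟪u, x⟫) = fun x => ‖u‖ ^ 2 * iteratedDeriv 2 g ⟪u, x⟫ := by
  let b := stdOrthonormalBasis ℝ E
  funext x
  have hcomp : (fun x => g ⟪u, x⟫) = g ∘ innerSL ℝ u := rfl
  rw [laplacian_eq_iteratedFDeriv_orthonormalBasis _ b, hcomp, ← real_inner_self_eq_norm_sq,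
    ← b.sum_inner_mul_inner u u, Finset.sum_mul]
  refine Finset.sum_congr rfl fun i _ => ?_
  rw [(innerSL ℝ u).iteratedFDeriv_comp_right hg x le_rfl,
    ContinuousMultilinearMap.compContinuousLinearMap_apply,
    iteratedFDeriv_apply_eq_iteratedDeriv_mul_prod]
  simp [Fin.prod_univ_two, real_inner_comm u]

theorem laplacian_iterate_congr_nhds {f₁ f₂ : E → ℝ} {x : E} (h : f₁ =ᶠ[𝓝 x] f₂) (k : ℕ) :
    Δ^[k] f₁ =ᶠ[𝓝 x] Δ^[k] f₂ := by
  induction k with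
  | zero => exact h
  | succ k ih =>
    simp only [Function.iterate_succ_apply']
    exact laplacian_congr_nhds ih

theorem laplacian_exp_inner_sub {u : E} (hu : ‖u‖ = 1) (a : ℝ) :
    Δ (fun x => exp (⟪u, x⟫ - a)) = fun x => exp (⟪u, x⟫ - a) := by
  rw [laplacian_comp_inner u (g := fun s => exp (s - a)) (by fun_prop),
    iteratedDeriv_comp_sub_const, iteratedDeriv_eq_iterate, iter_deriv_exp, hu]
  simp

end Laplacian

section Blend

variable {E : Type*} [NormedAddCommGroup E] [NormedSpace ℝ E] [HasContDiffBump E] {c : E}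

theorem ContDiffBump.le_of_rOut_le_rIn {φ ψ : ContDiffBump c} (h : φ.rOut ≤ ψ.rIn) (x : E) :
    φ x ≤ ψ x := by
  rcases le_or_gt (dist x c) ψ.rIn with hx | hx
  · rw [ψ.one_of_mem_closedBall hx]
    exact φ.le_one
  · rw [φ.zero_of_le_dist (h.trans hx.le)]
    exact ψ.nonneg

noncomputable def bumpBlend (φ ψ : ContDiffBump c) (t : E → ℝ) : E → ℝ :=
  fun x => φ x + (ψ x - φ x) * t x

variable {φ ψ : ContDiffBump c} {t : E → ℝ}

theorem contDiff_bumpBlend (ht : ContDiff ℝ ∞ t) : ContDiff ℝ ∞ (bumpBlend φ ψ t) :=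
  φ.contDiff.add ((ψ.contDiff.sub φ.contDiff).mul ht)

theorem bumpBlend_eq_zero_of_le_dist (h : φ.rOut ≤ ψ.rIn) {x : E} (hx : ψ.rOut ≤ dist x c) :
    bumpBlend φ ψ t x = 0 := by
  have hφ : φ x = 0 := φ.zero_of_le_dist (h.trans (ψ.rIn_lt_rOut.le.trans hx))
  simp [bumpBlend, hφ, ψ.zero_of_le_dist hx]

theorem hasCompactSupport_bumpBlend [FiniteDimensional ℝ E] (h : φ.rOut ≤ ψ.rIn) :
    HasCompactSupport (bumpBlend φ ψ t) :=
  HasCompactSupport.intro (isCompact_closedBall c ψ.rOut) fun _ hx =>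
    bumpBlend_eq_zero_of_le_dist h (not_le.1 hx).le

theorem bumpBlend_eq_one (h : φ.rOut ≤ ψ.rIn) {x : E} (hx : x ∈ closedBall c φ.rIn) :
    bumpBlend φ ψ t x = 1 := by
  have hψ : ψ x = 1 :=
    ψ.one_of_mem_closedBall (closedBall_subset_closedBall (φ.rIn_lt_rOut.le.trans h) hx)
  simp [bumpBlend, φ.one_of_mem_closedBall hx, hψ]

theorem bumpBlend_eventuallyEq {x : E} (hx₁ : φ.rOut < dist x c) (hx₂ : dist x c < ψ.rIn) :
    bumpBlend φ ψ t =ᶠ[𝓝 x] t := by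
  have hU : IsOpen {y | φ.rOut < dist y c ∧ dist y c < ψ.rIn} :=
    (isOpen_lt continuous_const (continuous_id.dist continuous_const)).inter
      (isOpen_lt (continuous_id.dist continuous_const) continuous_const)
  filter_upwards [hU.mem_nhds ⟨hx₁, hx₂⟩] with y hy
  simp [bumpBlend, φ.zero_of_le_dist hy.1.le, ψ.one_of_mem_closedBall hy.2.le]

theorem bumpBlend_mem_Icc (h : φ.rOut ≤ ψ.rIn) (ht : ∀ x ∈ ball c ψ.rOut, t x ∈ Icc 0 1)
    (x : E) : bumpBlend φ ψ t x ∈ Icc 0 1 := by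
  rcases lt_or_ge (dist x c) ψ.rOut with hx | hx
  · obtain ⟨ht₀, ht₁⟩ := ht x hx
    have hφψ := ContDiffBump.le_of_rOut_le_rIn h x
    have := φ.nonneg (x := x)
    have := ψ.le_one (x := x)
    constructor <;> simp only [bumpBlend] <;> nlinarith
  · rw [bumpBlend_eq_zero_of_le_dist h hx]
    exact ⟨le_rfl, zero_le_one⟩

end Blend

theorem statement12 (d : ℕ) (hd : 1 ≤ d) (N : ℕ) :
    ∃ (η : SchwartzMap (EuclideanSpace ℝ (Fin d)) ℝ) (c : ℝ), 0 < c ∧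
      (∀ x, 0 ≤ η x ∧ η x ≤ 1) ∧
      (∀ x, ‖x‖ ≤ 1 → η x = 1) ∧
      (∀ x, 2 ≤ ‖x‖ → η x = 0) ∧
      (∀ y : EuclideanSpace ℝ (Fin d),
        5 / 4 ≤ ‖y‖ → ‖y‖ ≤ 7 / 4 → c ≤ (lap d)^[2 * N] (⇑η) y) := by
  let u : EuclideanSpace ℝ (Fin d) := EuclideanSpace.single ⟨0, hd⟩ 1
  have hu : ‖u‖ = 1 := by simp [u]
  let φ : ContDiffBump (0 : EuclideanSpace ℝ (Fin d)) := ⟨1, 9 / 8, by norm_num, by norm_num⟩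
  let ψ : ContDiffBump (0 : EuclideanSpace ℝ (Fin d)) := ⟨15 / 8, 2, by norm_num, by norm_num⟩
  have hφψ : φ.rOut ≤ ψ.rIn := by norm_num [φ, ψ]
  let t : EuclideanSpace ℝ (Fin d) → ℝ := fun x => exp (⟪u, x⟫ - 2)
  have ht : ∀ x ∈ ball 0 ψ.rOut, t x ∈ Icc 0 1 := fun x hx => by
    have hx : ‖x‖ < 2 := mem_ball_zero_iff.1 hx
    have hinner : ⟪u, x⟫ ≤ ‖x‖ := by simpa [hu] using real_inner_le_norm u x
    exact ⟨(exp_pos _).le, exp_le_one_iff.2 (by linarith)⟩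
  let η := (hasCompactSupport_bumpBlend (t := t) hφψ).toSchwartzMap
    (contDiff_bumpBlend (contDiff_exp.comp ((innerSL ℝ u).contDiff.sub contDiff_const)))
  refine ⟨η, exp (-4), exp_pos _, bumpBlend_mem_Icc hφψ ht,
    fun x hx => bumpBlend_eq_one hφψ (mem_closedBall_zero_iff.2 hx),
    fun x hx => bumpBlend_eq_zero_of_le_dist hφψ (by rwa [dist_zero_right]), fun y hy₁ hy₂ => ?_⟩
  have hηt : ⇑η =ᶠ[𝓝 y] t :=
    bumpBlend_eventuallyEq (by norm_num [φ]; linarith) (by norm_num [ψ]; linarith)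
  rw [lap_eq_laplacian, (laplacian_iterate_congr_nhds hηt _).eq_of_nhds,
    Function.iterate_fixed (laplacian_exp_inner_sub hu 2)]
  have hinner : -‖y‖ ≤ ⟪u, y⟫ := by
    simpa [hu] using neg_le_of_abs_le (abs_real_inner_le_norm u y)
  exact exp_le_exp.2 (by linarith)
end

section
/- Let d ≥ 1 and for ℓ ∈ ℕ₀ set B_ℓ := B(3·2^{ℓ−1} e₁, 2^{ℓ−3}) ⊆ ℝ^d, where e₁ is the first standard unit vector. Then: (a) the balls (B_ℓ)_{ℓ∈ℕ₀} are pairwise disjoint; (b) for every j ∈ ℕ one has B_ℓ ⊆ B(0, 2^j) for all 0 ≤ ℓ ≤ j−1; (c) for all 0 < p ≤ u < ∞, every j ∈ ℕ and all nonnegative real numbers a_0, …, a_{j−1}, one has ‖Σ_{ℓ=0}^{j−1} a_ℓ · 1_{B_ℓ} ∣ M^u_p‖ ≥ |B(0,2^j)|^{1/u − 1/p} · (Σ_{ℓ=0}^{j−1} a_ℓ^p · |B_ℓ|)^{1/p}, where 1_{B_ℓ} denotes the indicator function of B_ℓ. -/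
open MeasureTheory Metric ENNReal

noncomputable def morreyNorm (d : ℕ) (p u : ℝ)
    (f : EuclideanSpace ℝ (Fin d) → ℝ≥0∞) : ℝ≥0∞ :=
  ⨆ (y : EuclideanSpace ℝ (Fin d)) (R : ℝ) (_ : 0 < R),
    volume (ball y R) ^ (1 / u - 1 / p) * (∫⁻ x in ball y R, f x ^ p) ^ (1 / p)

noncomputable def morreyNormC (d : ℕ) (p u : ℝ)
    (f : EuclideanSpace ℝ (Fin d) → ℂ) : ℝ≥0∞ :=
  morreyNorm d p u fun x => (‖f x‖₊ : ℝ≥0∞)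

/-! The centres `3·2^{ℓ-1} e₁` at least double from one ball to the next while each radius
`2^{ℓ-3}` is a twelfth of the distance of the centre from `0`, so the balls on the ray through
`e₁` are pairwise disjoint and `B_0, …, B_{j-1}` all sit inside `B(0, 2^j)`. On each `B_ℓ`
the function `∑ a_ℓ 1_{B_ℓ}` equals `a_ℓ`, so its `p`-th power integrates over `B(0, 2^j)` to
at least `∑ a_ℓ^p |B_ℓ|`; testing the supremum defining the Morrey norm at the ball
`B(0, 2^j)` gives the bound. -/

lemma two_rpow_natCast_sub_one (ℓ : ℕ) : (2 : ℝ) ^ ((ℓ : ℝ) - 1) = 2 ^ ℓ / 2 := by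
  rw [Real.rpow_sub_one two_ne_zero, Real.rpow_natCast]

lemma two_rpow_natCast_sub_three (ℓ : ℕ) : (2 : ℝ) ^ ((ℓ : ℝ) - 3) = 2 ^ ℓ / 8 := by
  rw [Real.rpow_sub two_pos, Real.rpow_natCast]
  norm_num

lemma two_mul_two_pow_le_two_pow {ℓ m : ℕ} (h : ℓ < m) : (2 : ℝ) * 2 ^ ℓ ≤ 2 ^ m := by
  simpa [pow_succ'] using pow_le_pow_right₀ one_le_two (Nat.succ_le_of_lt h)

section DyadicBalls

variable {E : Type*} [NormedAddCommGroup E] [NormedSpace ℝ E]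

lemma dist_smul_smul_of_norm_eq_one {v : E} (hv : ‖v‖ = 1) (c c' : ℝ) :
    dist (c • v) (c' • v) = |c - c'| := by
  rw [dist_eq_norm, ← sub_smul, norm_smul, hv, mul_one, Real.norm_eq_abs]

/-- `B(3·2^{ℓ-1} v, 2^{ℓ-3})`, with the real powers written as `2^ℓ / 2` and `2^ℓ / 8`. -/
def dyadicBall (v : E) (ℓ : ℕ) : Set E :=
  ball ((3 * 2 ^ ℓ / 2 : ℝ) • v) (2 ^ ℓ / 8)

lemma disjoint_dyadicBall_of_lt {v : E} (hv : ‖v‖ = 1) {ℓ m : ℕ} (hℓm : ℓ < m) :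
    Disjoint (dyadicBall v ℓ) (dyadicBall v m) := by
  refine ball_disjoint_ball ?_
  have hm := two_mul_two_pow_le_two_pow hℓm
  have hℓ : (0 : ℝ) < 2 ^ ℓ := by positivity
  rw [dist_smul_smul_of_norm_eq_one hv, abs_sub_comm, abs_of_nonneg (by linarith)]
  linarith

lemma pairwise_disjoint_dyadicBall {v : E} (hv : ‖v‖ = 1) :
    Pairwise (Function.onFun Disjoint (dyadicBall v)) :=
  pairwise_disjoint_on _ |>.mpr fun _ _ h => disjoint_dyadicBall_of_lt hv h

lemma dyadicBall_subset_ball_zero {v : E} (hv : ‖v‖ = 1) {ℓ j : ℕ} (hℓj : ℓ < j) :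
    dyadicBall v ℓ ⊆ ball 0 (2 ^ j) := by
  refine ball_subset_ball' ?_
  have hj := two_mul_two_pow_le_two_pow hℓj
  have hℓ : (0 : ℝ) < 2 ^ ℓ := by positivity
  rw [dist_zero_right, norm_smul, hv, mul_one, Real.norm_of_nonneg (by positivity)]
  linarith

end DyadicBalls

lemma morreyNormC_ofReal (d : ℕ) (p u : ℝ) (g : EuclideanSpace ℝ (Fin d) → ℝ) :
    morreyNormC d p u (fun x => (g x : ℂ)) = morreyNorm d p u (fun x => ‖g x‖ₑ) := by
  simp only [morreyNormC, ← enorm_eq_nnnorm, ← ofReal_norm, Complex.norm_real]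

lemma le_morreyNorm (d : ℕ) (p u : ℝ) (f : EuclideanSpace ℝ (Fin d) → ℝ≥0∞)
    (y : EuclideanSpace ℝ (Fin d)) {R : ℝ} (hR : 0 < R) :
    volume (ball y R) ^ (1 / u - 1 / p) * (∫⁻ x in ball y R, f x ^ p) ^ (1 / p) ≤
      morreyNorm d p u f :=
  le_iSup₂_of_le y R (le_iSup_of_le hR le_rfl)

lemma Finset.sum_mul_indicator_one_of_mem {α ι M : Type*} [NonAssocSemiring M]
    {s : ι → Set α} {J : Finset ι} (hs : (J : Set ι).PairwiseDisjoint s) (a : ι → M)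
    {ℓ : ι} (hℓ : ℓ ∈ J) {x : α} (hx : x ∈ s ℓ) :
    ∑ m ∈ J, a m * (s m).indicator (fun _ => 1) x = a ℓ := by
  rw [Finset.sum_eq_single_of_mem ℓ hℓ, Set.indicator_of_mem hx, mul_one]
  intro m hm hmℓ
  rw [Set.indicator_of_notMem (Set.disjoint_left.mp (hs hℓ hm hmℓ.symm) hx), mul_zero]

lemma sum_le_setLIntegral_sum_mul_indicator {α ι : Type*} [MeasurableSpace α] (μ : Measure α)
    {s : ι → Set α} {J : Finset ι} (hs : (J : Set ι).PairwiseDisjoint s)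
    (hmeas : ∀ ℓ ∈ J, MeasurableSet (s ℓ)) {t : Set α} (hst : ∀ ℓ ∈ J, s ℓ ⊆ t)
    {a : ι → ℝ} (ha : ∀ ℓ ∈ J, 0 ≤ a ℓ) {p : ℝ} (hp : 0 ≤ p) :
    ∑ ℓ ∈ J, ENNReal.ofReal (a ℓ ^ p) * μ (s ℓ) ≤
      ∫⁻ x in t, ‖∑ ℓ ∈ J, a ℓ * (s ℓ).indicator (fun _ => (1 : ℝ)) x‖ₑ ^ p ∂μ := by
  have hpiece : ∀ ℓ ∈ J, ∫⁻ x in s ℓ, ‖∑ m ∈ J, a m * (s m).indicator (fun _ => (1 : ℝ)) x‖ₑ ^ p ∂μ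
      = ENNReal.ofReal (a ℓ ^ p) * μ (s ℓ) := by
    intro ℓ hℓ
    rw [setLIntegral_congr_fun (hmeas ℓ hℓ) fun x hx => by
      rw [Finset.sum_mul_indicator_one_of_mem hs a hℓ hx], setLIntegral_const,
      Real.enorm_of_nonneg (ha ℓ hℓ), ENNReal.ofReal_rpow_of_nonneg (ha ℓ hℓ) hp]
  rw [← Finset.sum_congr rfl hpiece, ← lintegral_biUnion_finset hs hmeas]
  exact lintegral_mono_set (Set.iUnion₂_subset hst)

theorem statement13 (d : ℕ) (hd : 0 < d) :
    ∀ e₁ : EuclideanSpace ℝ (Fin d), e₁ = EuclideanSpace.single (⟨0, hd⟩ : Fin d) (1 : ℝ) →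
    ∀ B : ℕ → Set (EuclideanSpace ℝ (Fin d)),
      B = (fun ℓ : ℕ => ball ((3 * (2 : ℝ) ^ ((ℓ : ℝ) - 1)) • e₁) ((2 : ℝ) ^ ((ℓ : ℝ) - 3))) →
      -- (a) the balls are pairwise disjoint
      (Pairwise (Function.onFun Disjoint B)) ∧
      -- (b) for every j ≥ 1 they are contained in B(0, 2^j) for 0 ≤ ℓ ≤ j - 1
      (∀ j : ℕ, 1 ≤ j → ∀ ℓ : ℕ, ℓ < j →
        B ℓ ⊆ ball (0 : EuclideanSpace ℝ (Fin d)) ((2 : ℝ) ^ j)) ∧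
      -- (c) the lower Morrey-norm bound
      (∀ p u : ℝ, 0 < p → p ≤ u → ∀ j : ℕ, 1 ≤ j → ∀ a : ℕ → ℝ, (∀ ℓ, 0 ≤ a ℓ) →
        volume (ball (0 : EuclideanSpace ℝ (Fin d)) ((2 : ℝ) ^ j)) ^ (1 / u - 1 / p) *
            (∑ ℓ ∈ Finset.range j, ENNReal.ofReal (a ℓ ^ p) * volume (B ℓ)) ^ (1 / p) ≤
          morreyNormC d p u
            (fun x => ((∑ ℓ ∈ Finset.range j,
              a ℓ * Set.indicator (B ℓ) (fun _ => (1 : ℝ)) x : ℝ) : ℂ))) := by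
  intro e₁ he₁ B hB
  have hunit : ‖e₁‖ = 1 := by rw [he₁, PiLp.norm_single, norm_one]
  obtain rfl : B = dyadicBall e₁ := by
    rw [hB]; funext ℓ
    rw [dyadicBall, two_rpow_natCast_sub_one, two_rpow_natCast_sub_three, mul_div_assoc]
  have hdisj := pairwise_disjoint_dyadicBall hunit
  refine ⟨hdisj, fun j _ ℓ hℓ => dyadicBall_subset_ball_zero hunit hℓ, ?_⟩
  intro p u hp _ j _ a ha
  rw [morreyNormC_ofReal]
  refine le_trans ?_ (le_morreyNorm d p u _ 0 (by positivity : (0 : ℝ) < 2 ^ j))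
  gcongr
  exact sum_le_setLIntegral_sum_mul_indicator volume (hdisj.set_pairwise _)
    (fun _ _ => measurableSet_ball) (fun ℓ hℓ => dyadicBall_subset_ball_zero hunit
      (Finset.mem_range.mp hℓ)) (fun ℓ _ => ha ℓ) hp.le
end

section
/- Let d ≥ 1, 0 < p ≤ u < ∞, s ∈ ℝ and c > 0. Let K ∈ S(ℝ^d) be a real-valued Schwartz function with K(y) ≥ c for all y with 5/4 ≤ |y| ≤ 7/4, and let ζ : ℝ^d → [0, ∞) be smooth with support contained in B(0, 1/8) and ∫_{ℝ^d} ζ(z) dz = 1. For k ∈ ℕ set K_k(x) := 2^{kd} K(2^k x), and for j ∈ ℕ set ζ_j(x) := ζ(2^j x). Then there exists a constant C > 0, independent of j, such that for every j ∈ ℕ: ‖ sup_{1 ≤ k ≤ j} 2^{ks} |(K_k ∗ ζ_j)(·)| ∣ M^u_p ‖ ≥ C · 2^{j(s − d/p)} · max_{0 ≤ ℓ ≤ j−1} 2^{ℓ (d(1/p − 1) − s)}. -/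
/-! For `ℓ < j` put `k = j - ℓ`. On the ball `B` of radius `2⁻ᵏ/8` around a point of norm
`(3/2)·2⁻ᵏ`, the kernel `K(2ᵏ(x - y))` is evaluated inside the annulus `5/4 ≤ |·| ≤ 7/4` for every
`y` in the support of `ζ_j` (which lies in `B(0, 2⁻ʲ/8) ⊆ B(0, 2⁻ᵏ/8)`), so there `K ≥ c` and the
`k`-th term is at least `c·2^{k(s+d)}·2^{-jd}`. Testing the Morrey norm on `B` gives
`c·2^{k(s+d)-jd}·|B|^{1/u} ≳ 2^{j(s-d/p)}·2^{ℓ(d(1/p-1)-s)}`, since `1/u ≤ 1/p`. -/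

open MeasureTheory Metric ENNReal

noncomputable def unitBallVolume (d : ℕ) : ℝ :=
  (volume (ball (0 : EuclideanSpace ℝ (Fin d)) 1)).toReal

theorem unitBallVolume_pos (d : ℕ) : 0 < unitBallVolume d :=
  ENNReal.toReal_pos (measure_ball_pos volume 0 one_pos).ne' measure_ball_lt_top.ne

theorem volume_ball_eq_ofReal {d : ℕ} (y : EuclideanSpace ℝ (Fin d)) {R : ℝ} (hR : 0 < R) :
    volume (ball y R) = ENNReal.ofReal (R ^ d * unitBallVolume d) := by
  rw [Measure.addHaar_ball_of_pos volume y hR, finrank_euclideanSpace_fin, unitBallVolume,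
    ENNReal.ofReal_mul (by positivity), ENNReal.ofReal_toReal measure_ball_lt_top.ne]

theorem le_morreyNorm_of_le_on_ball {d : ℕ} {p u : ℝ} (hp : 0 < p)
    {f : EuclideanSpace ℝ (Fin d) → ℝ≥0∞} {y : EuclideanSpace ℝ (Fin d)} {R : ℝ} (hR : 0 < R)
    {M : ℝ≥0∞} (hM : ∀ x ∈ ball y R, M ≤ f x) :
    M * volume (ball y R) ^ (1 / u) ≤ morreyNorm d p u f := by
  have hB₀ : volume (ball y R) ≠ 0 := (measure_ball_pos volume y hR).ne'
  have hB_top : volume (ball y R) ≠ ⊤ := measure_ball_lt_top.ne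
  have hint : M ^ p * volume (ball y R) ≤ ∫⁻ x in ball y R, f x ^ p := by
    rw [← setLIntegral_const]
    exact setLIntegral_mono' measurableSet_ball fun x hx => ENNReal.rpow_le_rpow (hM x hx) hp.le
  calc M * volume (ball y R) ^ (1 / u)
      = volume (ball y R) ^ (1 / u - 1 / p) * (M ^ p * volume (ball y R)) ^ (1 / p) := by
        rw [ENNReal.mul_rpow_of_nonneg _ _ (by positivity), ← ENNReal.rpow_mul,
          mul_one_div_cancel hp.ne', ENNReal.rpow_one, mul_left_comm,
          ← ENNReal.rpow_add _ _ hB₀ hB_top, sub_add_cancel]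
    _ ≤ volume (ball y R) ^ (1 / u - 1 / p) * (∫⁻ x in ball y R, f x ^ p) ^ (1 / p) := by
        gcongr
    _ ≤ morreyNorm d p u f :=
        le_iSup_of_le y (le_iSup_of_le R (le_iSup_of_le hR le_rfl))

theorem norm_lt_div_of_comp_smul_ne_zero {E F : Type*} [NormedAddCommGroup E] [NormedSpace ℝ E]
    [Zero F] {ζ : E → F} {r a : ℝ} (ha : 0 < a) (hζ : tsupport ζ ⊆ ball 0 r) {y : E}
    (hy : ζ (a • y) ≠ 0) : ‖y‖ < r / a := by
  have := hζ (subset_tsupport ζ hy)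
  rw [mem_ball_zero_iff, norm_smul, Real.norm_of_nonneg ha.le] at this
  rwa [lt_div_iff₀ ha, mul_comm]

theorem norm_sub_mem_Icc_of_mem_ball {E : Type*} [SeminormedAddCommGroup E] {x y y₀ : E} {ρ : ℝ}
    (hy₀ : ‖y₀‖ = 3 / 2 * ρ) (hx : x ∈ ball y₀ (ρ / 8)) (hy : ‖y‖ < ρ / 8) :
    5 / 4 * ρ ≤ ‖x - y‖ ∧ ‖x - y‖ ≤ 7 / 4 * ρ := by
  rw [mem_ball_iff_norm] at hx
  have h₁ := norm_sub_norm_le y₀ x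
  have h₂ := norm_sub_le x y
  have h₃ := norm_sub_norm_le x y
  have h₄ := norm_le_insert' x y₀
  rw [norm_sub_rev] at h₁
  constructor <;> linarith

theorem mul_integral_le_integral_mul_of_le_on_support {α : Type*} [MeasurableSpace α]
    {μ : Measure α} {F φ : α → ℝ} {c : ℝ} (hφ : ∀ y, 0 ≤ φ y) (hφ_int : Integrable φ μ)
    (hFφ_int : Integrable (fun y => F y * φ y) μ) (hF : ∀ y, φ y ≠ 0 → c ≤ F y) :
    c * ∫ y, φ y ∂μ ≤ ∫ y, F y * φ y ∂μ := by
  rw [← integral_const_mul]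
  refine integral_mono (hφ_int.const_mul c) hFφ_int fun y => ?_
  by_cases h : φ y = 0
  · simp [h]
  · exact mul_le_mul_of_nonneg_right (hF y h) (hφ y)

theorem div_pow_le_integral_dilate_mul_dilate {d : ℕ} {c : ℝ}
    (K : SchwartzMap (EuclideanSpace ℝ (Fin d)) ℝ)
    (hK : ∀ y : EuclideanSpace ℝ (Fin d), 5 / 4 ≤ ‖y‖ → ‖y‖ ≤ 7 / 4 → c ≤ K y)
    {ζ : EuclideanSpace ℝ (Fin d) → ℝ} (hζ_nonneg : ∀ z, 0 ≤ ζ z)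
    (hζ_supp : tsupport ζ ⊆ ball (0 : EuclideanSpace ℝ (Fin d)) (1 / 8)) (hζ_one : ∫ z, ζ z = 1)
    {a b : ℝ} (ha : 0 < a) (hab : a ≤ b) {x y₀ : EuclideanSpace ℝ (Fin d)}
    (hy₀ : ‖y₀‖ = 3 / 2 * a⁻¹) (hx : x ∈ ball y₀ (a⁻¹ / 8)) :
    c / b ^ d ≤ ∫ y, K (a • (x - y)) * ζ (b • y) := by
  have hb : 0 < b := ha.trans_le hab
  have hζb_int : Integrable fun y => ζ (b • y) :=
    (Integrable.of_integral_ne_zero (by rw [hζ_one]; exact one_ne_zero)).comp_smul hb.ne'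
  have hζb_one : ∫ y, ζ (b • y) = (b ^ d)⁻¹ := by
    rw [Measure.integral_comp_smul_of_nonneg volume ζ b (hR := hb.le), hζ_one,
      finrank_euclideanSpace_fin, smul_eq_mul, mul_one]
  have hKζ_int : Integrable fun y => K (a • (x - y)) * ζ (b • y) :=
    hζb_int.bdd_mul (by fun_prop) (c := ‖K.toBoundedContinuousFunction‖)
      (.of_forall fun y => K.toBoundedContinuousFunction.norm_coe_le_norm _)
  have hK_on_supp : ∀ y, ζ (b • y) ≠ 0 → c ≤ K (a • (x - y)) := by
    intro y hy
    have hy_small : ‖y‖ < a⁻¹ / 8 := by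
      calc ‖y‖ < (1 / 8) / b := norm_lt_div_of_comp_smul_ne_zero hb hζ_supp hy
        _ ≤ (1 / 8) / a := div_le_div_of_nonneg_left (by norm_num) ha hab
        _ = a⁻¹ / 8 := by ring
    obtain ⟨h₁, h₂⟩ := norm_sub_mem_Icc_of_mem_ball hy₀ hx hy_small
    apply hK <;> rw [norm_smul, Real.norm_of_nonneg ha.le]
    · calc (5 / 4 : ℝ) = a * (5 / 4 * a⁻¹) := by field_simp
        _ ≤ a * ‖x - y‖ := by gcongr
    · calc a * ‖x - y‖ ≤ a * (7 / 4 * a⁻¹) := by gcongr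
        _ = 7 / 4 := by field_simp
  calc c / b ^ d = c * ∫ y, ζ (b • y) := by rw [hζb_one, div_eq_mul_inv]
    _ ≤ ∫ y, K (a • (x - y)) * ζ (b • y) :=
      mul_integral_le_integral_mul_of_le_on_support (fun y => hζ_nonneg _) hζb_int hKζ_int
        hK_on_supp

theorem two_rpow_natCast_mul (k d : ℕ) : (2 : ℝ) ^ ((k : ℝ) * d) = (2 ^ k) ^ d := by
  rw [← Nat.cast_mul, Real.rpow_natCast, pow_mul]

-- The right-hand side is `|B(y₀, 2⁻ᵏ/8)| ^ (1/u)` times the lower bound of the `k`-th term on that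
-- ball; `1/u ≤ 1/p` is what makes it dominate the left-hand side.
theorem dyadic_scaling_le {d k ℓ : ℕ} {p u s c ω : ℝ} (hp : 0 < p) (hpu : p ≤ u) (hc : 0 ≤ c)
    (hω : 0 ≤ ω) :
    c * (ω / 8 ^ d) ^ (1 / u) * 2 ^ (((k + ℓ : ℕ) : ℝ) * (s - d / p)) *
        2 ^ ((ℓ : ℝ) * (d * (1 / p - 1) - s)) ≤
      2 ^ ((k : ℝ) * s) * (2 ^ (k * d) * (c / (2 ^ (k + ℓ)) ^ d)) *
        (((2 ^ k)⁻¹ / 8) ^ d * ω) ^ (1 / u) := by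
  set W := (ω / 8 ^ d) ^ (1 / u)
  have h_vol : ((2 ^ k)⁻¹ / 8) ^ d * ω = 2 ^ (-((k : ℝ) * d)) * (ω / 8 ^ d) := by
    rw [Real.rpow_neg zero_le_two, two_rpow_natCast_mul, div_eq_mul_inv _ (8 : ℝ), mul_pow,
      inv_pow, inv_pow]
    ring
  have h_exp : (((k + ℓ : ℕ) : ℝ) * (s - d / p)) + ℓ * (d * (1 / p - 1) - s) ≤
      k * s + k * d + -((k + ℓ : ℕ) * d) + -(k * d) * (1 / u) := by
    have := mul_le_mul_of_nonneg_left (one_div_le_one_div_of_le hp hpu)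
      (by positivity : (0 : ℝ) ≤ k * d)
    push_cast
    linear_combination this
  rw [h_vol, Real.mul_rpow (by positivity) (by positivity), ← Real.rpow_mul zero_le_two]
  calc c * W * 2 ^ (((k + ℓ : ℕ) : ℝ) * (s - d / p)) * 2 ^ ((ℓ : ℝ) * (d * (1 / p - 1) - s))
      = c * W * 2 ^ (((k + ℓ : ℕ) : ℝ) * (s - d / p) + ℓ * (d * (1 / p - 1) - s)) := by
        rw [Real.rpow_add two_pos]; ring
    _ ≤ c * W * 2 ^ (k * s + k * d + -((k + ℓ : ℕ) * d) + -(k * d) * (1 / u) : ℝ) := by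
        gcongr
        exact one_le_two
    _ = 2 ^ ((k : ℝ) * s) * (2 ^ (k * d) * (c / (2 ^ (k + ℓ)) ^ d)) *
          (2 ^ (-((k : ℝ) * d) * (1 / u)) * W) := by
        rw [Real.rpow_add two_pos, Real.rpow_add two_pos, Real.rpow_add two_pos,
          Real.rpow_neg zero_le_two, two_rpow_natCast_mul, two_rpow_natCast_mul, ← pow_mul]
        ring

theorem statement16_general (d : ℕ) (hd : 1 ≤ d) (p u s : ℝ) (hp : 0 < p) (hpu : p ≤ u)
    (c : ℝ) (hc : 0 < c)
    (K : SchwartzMap (EuclideanSpace ℝ (Fin d)) ℝ)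
    (hK : ∀ y : EuclideanSpace ℝ (Fin d), 5 / 4 ≤ ‖y‖ → ‖y‖ ≤ 7 / 4 → c ≤ K y)
    (ζ : EuclideanSpace ℝ (Fin d) → ℝ)
    (hζ_nonneg : ∀ z, 0 ≤ ζ z)
    (hζ_supp : tsupport ζ ⊆ ball (0 : EuclideanSpace ℝ (Fin d)) (1 / 8))
    (hζ_one : ∫ z, ζ z = 1) :
    ∃ C : ℝ, 0 < C ∧ ∀ j : ℕ, 1 ≤ j →
      ENNReal.ofReal (C * (2 : ℝ) ^ ((j : ℝ) * (s - d / p))) *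
          (⨆ ℓ ∈ Finset.range j,
            ENNReal.ofReal ((2 : ℝ) ^ ((ℓ : ℝ) * (d * (1 / p - 1) - s)))) ≤
        morreyNorm d p u (fun x =>
          ⨆ k ∈ Finset.Icc 1 j, ENNReal.ofReal ((2 : ℝ) ^ ((k : ℝ) * s) *
            |∫ y, (2 : ℝ) ^ (k * d) * K ((2 : ℝ) ^ k • (x - y)) *
              ζ ((2 : ℝ) ^ j • y)|)) := by
  have hω := unitBallVolume_pos d
  have hu := hp.trans_le hpu
  refine ⟨c * (unitBallVolume d / 8 ^ d) ^ (1 / u), by positivity, fun j _ => ?_⟩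
  simp_rw [ENNReal.mul_iSup]
  refine iSup₂_le fun ℓ hℓ => ?_
  have hℓj := Finset.mem_range.mp hℓ
  obtain ⟨k, hk, rfl⟩ : ∃ k, 1 ≤ k ∧ j = k + ℓ := ⟨j - ℓ, by omega, by omega⟩
  have : Nonempty (Fin d) := ⟨⟨0, hd⟩⟩
  obtain ⟨y₀, hy₀⟩ := exists_norm_eq (EuclideanSpace ℝ (Fin d))
    (by positivity : (0 : ℝ) ≤ 3 / 2 * ((2 : ℝ) ^ k)⁻¹)
  have h_lower : ∀ x ∈ ball y₀ (((2 : ℝ) ^ k)⁻¹ / 8),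
      ENNReal.ofReal (2 ^ ((k : ℝ) * s) * (2 ^ (k * d) * (c / (2 ^ (k + ℓ)) ^ d))) ≤
        ⨆ k' ∈ Finset.Icc 1 (k + ℓ), ENNReal.ofReal ((2 : ℝ) ^ ((k' : ℝ) * s) *
          |∫ y, (2 : ℝ) ^ (k' * d) * K ((2 : ℝ) ^ k' • (x - y)) *
            ζ ((2 : ℝ) ^ (k + ℓ) • y)|) := by
    intro x hx
    refine le_iSup₂_of_le k (Finset.mem_Icc.mpr ⟨hk, by omega⟩) (ENNReal.ofReal_le_ofReal ?_)
    refine mul_le_mul_of_nonneg_left ((le_abs_self _).trans' ?_) (by positivity)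
    simp_rw [mul_assoc, integral_const_mul]
    exact mul_le_mul_of_nonneg_left (div_pow_le_integral_dilate_mul_dilate K hK hζ_nonneg
      hζ_supp hζ_one (by positivity) (pow_le_pow_right₀ one_le_two (by omega)) hy₀ hx)
      (by positivity)
  calc _ = _ := (ENNReal.ofReal_mul (by positivity)).symm
    _ ≤ _ := ENNReal.ofReal_le_ofReal (dyadic_scaling_le hp hpu hc.le hω.le)
    _ = _ := by
      rw [ENNReal.ofReal_mul, ← ENNReal.ofReal_rpow_of_nonneg, ← volume_ball_eq_ofReal y₀] <;>
        positivity
    _ ≤ _ := le_morreyNorm_of_le_on_ball hp (by positivity) h_lower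

theorem statement16 (d : ℕ) (hd : 1 ≤ d) (p u s : ℝ) (hp : 0 < p) (hpu : p ≤ u)
    (c : ℝ) (hc : 0 < c)
    (K : SchwartzMap (EuclideanSpace ℝ (Fin d)) ℝ)
    (hK : ∀ y : EuclideanSpace ℝ (Fin d), 5 / 4 ≤ ‖y‖ → ‖y‖ ≤ 7 / 4 → c ≤ K y)
    (ζ : EuclideanSpace ℝ (Fin d) → ℝ) (hζ_smooth : ContDiff ℝ (⊤ : ℕ∞) ζ)
    (hζ_nonneg : ∀ z, 0 ≤ ζ z)
    (hζ_supp : tsupport ζ ⊆ ball (0 : EuclideanSpace ℝ (Fin d)) (1 / 8))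
    (hζ_one : ∫ z, ζ z = 1) :
    ∃ C : ℝ, 0 < C ∧ ∀ j : ℕ, 1 ≤ j →
      ENNReal.ofReal (C * (2 : ℝ) ^ ((j : ℝ) * (s - d / p))) *
          (⨆ ℓ ∈ Finset.range j,
            ENNReal.ofReal ((2 : ℝ) ^ ((ℓ : ℝ) * (d * (1 / p - 1) - s)))) ≤
        morreyNorm d p u (fun x =>
          ⨆ k ∈ Finset.Icc 1 j, ENNReal.ofReal ((2 : ℝ) ^ ((k : ℝ) * s) *
            |∫ y, (2 : ℝ) ^ (k * d) * K ((2 : ℝ) ^ k • (x - y)) *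
              ζ ((2 : ℝ) ^ j • y)|)) :=
  statement16_general d hd p u s hp hpu c hc K hK ζ hζ_nonneg hζ_supp hζ_one
end
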